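/- arXiv:2007.11313 — 3 statements merged into one kernel-verified Lean document; each statement's English description precedes it below -/
import Mathlib

section
/- Let β > 0, α > 0 and m ∈ ℕ_0. Then the map x ↦ E_{β,x}[ e^{−α A_m(I)} | I ∈ B^+_m ] is non-increasing on ℕ_0, where B^+_m := {(I_k)_{k=1}^m : I_k ≥ 0 for all 1 ≤ k ≤ m}. The same monotonicity holds when conditioning on B^{0,+}_m (i.e. additionally requiring I_m = 0) instead of B^+_m. -/
open Filter

attribute [local instance] Classical.propDecidable

noncomputable section

/-- The normalizing constant `c_β = Σ_{k∈ℤ} e^{−β|k|/2} = (1+e^{−β/2})/(1−e^{−β/2})`. -/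
def cb (β : ℝ) : ℝ := (1 + Real.exp (-β / 2)) / (1 - Real.exp (-β / 2))

/-- The step distribution `P_β` on `ℤ`: `P_β({k}) = e^{−β|k|/2}/c_β`. -/
def pb (β : ℝ) (k : ℤ) : ℝ := Real.exp (-(β / 2) * |(k : ℝ)|) / cb β

/-- `Γ_β := c_β e^{−β}`. -/
def Gam (β : ℝ) : ℝ := cb β * Real.exp (-β)

/-- `tildeδ_c(β) := −log(1−e^{−β/2})`. -/
def tdc (β : ℝ) : ℝ := -Real.log (1 - Real.exp (-β / 2))

/-- The position `X_k` (1-based time `k`) of the path `(X_1,…,X_n)` started at `x`;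
by convention it is `x` for `k = 0` (and for `k > n`). -/
def valx (x : ℤ) {n : ℕ} (X : Fin n → ℤ) (k : ℕ) : ℤ :=
  if h : 1 ≤ k ∧ k ≤ n then X ⟨k - 1, by omega⟩ else x

/-- The probability weight of the path `(X_1,…,X_n)` of the walk started at `x`,
with i.i.d. increments of law `P_β`. -/
def wt (β : ℝ) (x : ℤ) {n : ℕ} (X : Fin n → ℤ) : ℝ :=
  ∏ k ∈ Finset.Icc 1 n, pb β (valx x X k - valx x X (k - 1))

/-- The expectation `E_{β,x}[F(X_1,…,X_n)]` for the `n`-step walk started at `x`. -/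
def Ewalk (β : ℝ) (x : ℤ) (n : ℕ) (F : (Fin n → ℤ) → ℝ) : ℝ :=
  ∑' X : Fin n → ℤ, F X * wt β x X

/-- The event `B^{0,+}_n`: the walk is non-negative and ends at `0`. -/
def inB0 {n : ℕ} (X : Fin n → ℤ) : Prop :=
  valx 0 X n = 0 ∧ ∀ k : Fin n, 0 ≤ X k

/-- The number of zeros among `X_1,…,X_n`. -/
def nzW {n : ℕ} (X : Fin n → ℤ) : ℕ := (Finset.univ.filter fun k : Fin n => X k = 0).card

/-- The signed area `A_n(X) = Σ_{i=0}^n X_i`, with `X_0 = x`. -/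
def area (x : ℤ) {n : ℕ} (X : Fin n → ℤ) : ℤ := x + ∑ k, X k

/-- The wetting partition function `Z_wet,N^{β,δ}`. -/
def Zwet (β δ : ℝ) (N : ℕ) : ℝ :=
  Ewalk β 0 N fun X => Real.exp (δ * (nzW X : ℝ)) * (if inB0 X then 1 else 0)

/-- The wetting free energy `h_β(δ)`; the limit of `(1/N) log Z_wet,N` exists by
supermultiplicativity, so it coincides with the `limsup` used here. -/
def hbeta (β δ : ℝ) : ℝ := limsup (fun N : ℕ => Real.log (Zwet β δ N) / (N : ℝ)) atTop

/-!
Conditioning on the first step writes the numerator and the denominator as iterates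
`φ_α(n + 1, x) = e^{-αx} ∑_{z ≥ 0} P_β(z - x) φ_α(n, z)` (with `α = 0` for the denominator).
Since `k ↦ e^{-β|k|/2}` is log-concave, the killed kernel `(x, z) ↦ 1_{z ≥ 0} P_β(z - x)` is
totally positive of order two, and composing such a kernel with a pair of functions whose ratio
is nonincreasing yields again a pair with nonincreasing ratio. Starting from the ratio `e^{-αx}`,
induction on `n` shows that `x ↦ φ_α(n, x) / φ_0(n, x)` is nonincreasing on `ℕ₀`.
-/

open scoped ENNReal

lemma cb_pos {β : ℝ} (hβ : 0 < β) : 0 < cb β := by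
  have : Real.exp (-β / 2) < 1 := Real.exp_lt_one_iff.mpr (by linarith)
  exact div_pos (by positivity) (by linarith)

lemma pb_pos {β : ℝ} (hβ : 0 < β) (k : ℤ) : 0 < pb β k :=
  div_pos (Real.exp_pos _) (cb_pos hβ)

lemma summable_pb {β : ℝ} (hβ : 0 < β) : Summable (pb β) := by
  have hr : Real.exp (-β / 2) < 1 := Real.exp_lt_one_iff.mpr (by linarith)
  have hpow : pb β = fun k : ℤ => Real.exp (-β / 2) ^ k.natAbs / cb β := by
    ext k
    rw [pb, ← Real.exp_nat_mul, Nat.cast_natAbs, Int.cast_abs]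
    congr 2
    ring
  rw [hpow]
  apply Summable.div_const
  apply Summable.of_nat_of_neg <;> simp only [Int.natAbs_natCast, Int.natAbs_neg] <;>
    exact summable_geometric_of_lt_one (Real.exp_pos _).le hr

lemma pb_sub_mul_pb_sub_le {β : ℝ} (hβ : 0 < β) {x y z w : ℤ} (hxy : x ≤ y) (hzw : z ≤ w) :
    pb β (z - y) * pb β (w - x) ≤ pb β (z - x) * pb β (w - y) := by
  simp only [pb, div_mul_div_comm, ← Real.exp_add]
  rw [div_le_div_iff_of_pos_right (by have := cb_pos hβ; positivity), Real.exp_le_exp]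
  have : |z - x| + |w - y| ≤ |z - y| + |w - x| := by
    rcases abs_cases (z - x) with ⟨e1, _⟩ | ⟨e1, _⟩ <;>
    rcases abs_cases (w - y) with ⟨e2, _⟩ | ⟨e2, _⟩ <;>
    rcases abs_cases (z - y) with ⟨e3, _⟩ | ⟨e3, _⟩ <;>
    rcases abs_cases (w - x) with ⟨e4, _⟩ | ⟨e4, _⟩ <;> omega
  have : (|z - x| + |w - y| : ℝ) ≤ |z - y| + |w - x| := by exact_mod_cast this
  push_cast at this ⊢
  nlinarith

lemma ENNReal.mul_add_mul_le_mul_add_mul {a b c d : ℝ≥0∞} (hab : a ≤ b) (hcd : c ≤ d) :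
    a * d + b * c ≤ a * c + b * d := by
  obtain ⟨e, rfl⟩ := exists_add_of_le hab
  calc a * d + (a + e) * c = a * c + a * d + e * c := by ring
    _ ≤ a * c + a * d + e * d := by gcongr
    _ = a * c + (a + e) * d := by ring

lemma ENNReal.tsum_mul_tsum_le_of_ratio {ι : Type*} [LinearOrder ι] {A B N D : ι → ℝ≥0∞}
    (hAB : ∀ z w, z ≤ w → B z * A w ≤ A z * B w)
    (hND : ∀ z w, z ≤ w → N w * D z ≤ N z * D w) :
    (∑' z, B z * N z) * (∑' z, A z * D z) ≤ (∑' z, A z * N z) * (∑' z, B z * D z) := by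
  let L : ι × ι → ℝ≥0∞ := fun p => B p.1 * N p.1 * (A p.2 * D p.2)
  let R : ι × ι → ℝ≥0∞ := fun p => A p.1 * N p.1 * (B p.2 * D p.2)
  have hpair : ∀ z w, z ≤ w → L (z, w) + L (w, z) ≤ R (z, w) + R (w, z) := fun z w h =>
    calc L (z, w) + L (w, z) = (B z * A w) * (N z * D w) + (A z * B w) * (N w * D z) := by ring
      _ ≤ (B z * A w) * (N w * D z) + (A z * B w) * (N z * D w) :=
        ENNReal.mul_add_mul_le_mul_add_mul (hAB z w h) (hND z w h)
      _ = R (z, w) + R (w, z) := by ring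
  have hsymm : ∀ p : ι × ι, L p + L p.swap ≤ R p + R p.swap := by
    rintro ⟨z, w⟩
    rcases le_total z w with h | h
    · exact hpair z w h
    · rw [Prod.swap_prod_mk, add_comm (L _), add_comm (R _)]
      exact hpair w z h
  have hswap : ∀ F : ι × ι → ℝ≥0∞, ∑' p : ι × ι, F p.swap = ∑' p, F p :=
    fun F => (Equiv.prodComm ι ι).tsum_eq F
  have hsum : ∑' p, L p + ∑' p, L p ≤ ∑' p, R p + ∑' p, R p := by
    calc ∑' p, L p + ∑' p, L p = ∑' p, (L p + L p.swap) := by rw [ENNReal.tsum_add, hswap]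
      _ ≤ ∑' p, (R p + R p.swap) := ENNReal.tsum_le_tsum hsymm
      _ = ∑' p, R p + ∑' p, R p := by rw [ENNReal.tsum_add, hswap]
  have hprod : ∀ F G : ι → ℝ≥0∞, (∑' z, F z) * (∑' z, G z) = ∑' p : ι × ι, F p.1 * G p.2 := by
    intro F G
    simp only [ENNReal.tsum_prod', ENNReal.tsum_mul_left, ENNReal.tsum_mul_right]
  rw [hprod, hprod]
  exact le_of_not_gt fun h => (ENNReal.add_lt_add h h).not_ge hsum

def killedKernel (β : ℝ) (x z : ℤ) : ℝ≥0∞ :=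
  if 0 ≤ z then ENNReal.ofReal (pb β (z - x)) else 0

/-- `areaLaplace β α E n x = E_{β,x}[e^{−α A_n(I)}; I_1, …, I_n ≥ 0, E(I_n)]`, computed by
conditioning on the first step. -/
def areaLaplace (β α : ℝ) (E : ℤ → Prop) : ℕ → ℤ → ℝ≥0∞
  | 0, x => ENNReal.ofReal (Real.exp (-α * x)) * if E x then 1 else 0
  | n + 1, x => ENNReal.ofReal (Real.exp (-α * x)) *
      ∑' z, killedKernel β x z * areaLaplace β α E n z

lemma killedKernel_mul_le {β : ℝ} (hβ : 0 < β) {x y z w : ℤ} (hxy : x ≤ y) (hzw : z ≤ w) :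
    killedKernel β y z * killedKernel β x w ≤ killedKernel β x z * killedKernel β y w := by
  unfold killedKernel
  by_cases hz : 0 ≤ z
  · rw [if_pos hz, if_pos hz, if_pos (hz.trans hzw), if_pos (hz.trans hzw),
      ← ENNReal.ofReal_mul (pb_pos hβ _).le, ← ENNReal.ofReal_mul (pb_pos hβ _).le]
    exact ENNReal.ofReal_le_ofReal (pb_sub_mul_pb_sub_le hβ hxy hzw)
  · simp [hz]

lemma ofReal_exp_mul_le {α α' : ℝ} (hα : α' ≤ α) {z w : ℤ} (hzw : z ≤ w) :
    ENNReal.ofReal (Real.exp (-α * w)) * ENNReal.ofReal (Real.exp (-α' * z)) ≤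
      ENNReal.ofReal (Real.exp (-α * z)) * ENNReal.ofReal (Real.exp (-α' * w)) := by
  rw [← ENNReal.ofReal_mul (Real.exp_pos _).le, ← ENNReal.ofReal_mul (Real.exp_pos _).le,
    ← Real.exp_add, ← Real.exp_add]
  refine ENNReal.ofReal_le_ofReal (Real.exp_le_exp.mpr ?_)
  have : (z : ℝ) ≤ w := by exact_mod_cast hzw
  nlinarith

lemma mul_mul_mul_le_mul_mul_mul {M : Type*} [CommMonoid M] [PartialOrder M] [IsOrderedMonoid M]
    {a b c d a' b' c' d' : M} (hac : a * c ≤ a' * c')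
    (hbd : b * d ≤ b' * d') : a * b * (c * d) ≤ a' * b' * (c' * d') := by
  rw [mul_mul_mul_comm, mul_mul_mul_comm a']
  exact mul_le_mul' hac hbd

lemma areaLaplace_mul_le {β α α' : ℝ} (hβ : 0 < β) (hα : α' ≤ α) (E : ℤ → Prop) (n : ℕ) :
    ∀ {z w : ℤ}, z ≤ w → areaLaplace β α E n w * areaLaplace β α' E n z ≤
      areaLaplace β α E n z * areaLaplace β α' E n w := by
  induction n with
  | zero =>
    intro z w hzw
    simp only [areaLaplace]
    exact mul_mul_mul_le_mul_mul_mul (ofReal_exp_mul_le hα hzw) (mul_comm _ _).le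
  | succ n ih =>
    intro z w hzw
    simp only [areaLaplace]
    exact mul_mul_mul_le_mul_mul_mul (ofReal_exp_mul_le hα hzw) (ENNReal.tsum_mul_tsum_le_of_ratio
      (fun u v huv => killedKernel_mul_le hβ hzw huv) (fun u v huv => ih huv))

lemma ofReal_exp_neg_mul_le_one {α : ℝ} (hα : 0 ≤ α) {x : ℤ} (hx : 0 ≤ x) :
    ENNReal.ofReal (Real.exp (-α * x)) ≤ 1 := by
  rw [ENNReal.ofReal_le_one, Real.exp_le_one_iff]
  have : (0 : ℝ) ≤ x := by exact_mod_cast hx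
  nlinarith

lemma areaLaplace_le_pow {β α : ℝ} (hα : 0 ≤ α) (E : ℤ → Prop) (n : ℕ) :
    ∀ {x : ℤ}, 0 ≤ x → areaLaplace β α E n x ≤ (∑' k, ENNReal.ofReal (pb β k)) ^ n := by
  induction n with
  | zero =>
    intro x hx
    rw [pow_zero, areaLaplace, ← mul_one 1]
    exact mul_le_mul' (ofReal_exp_neg_mul_le_one hα hx) (by split_ifs <;> simp)
  | succ n ih =>
    intro x hx
    have hstep : ∀ z, killedKernel β x z * areaLaplace β α E n z ≤
        ENNReal.ofReal (pb β (z - x)) * (∑' k, ENNReal.ofReal (pb β k)) ^ n := by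
      intro z
      unfold killedKernel
      split_ifs with hz
      · exact mul_le_mul' le_rfl (ih hz)
      · simp
    calc areaLaplace β α E (n + 1) x
        ≤ 1 * ∑' z, ENNReal.ofReal (pb β (z - x)) * (∑' k, ENNReal.ofReal (pb β k)) ^ n :=
          mul_le_mul' (ofReal_exp_neg_mul_le_one hα hx) (ENNReal.tsum_le_tsum hstep)
      _ = (∑' k, ENNReal.ofReal (pb β k)) ^ (n + 1) := by
          have hshift : ∑' z, ENNReal.ofReal (pb β (z - x)) = ∑' k, ENNReal.ofReal (pb β k) :=
            (Equiv.subRight x).tsum_eq fun k => ENNReal.ofReal (pb β k)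
          rw [one_mul, ENNReal.tsum_mul_right, hshift, pow_succ, mul_comm]

lemma areaLaplace_ne_top {β α : ℝ} (hβ : 0 < β) (hα : 0 ≤ α) (E : ℤ → Prop) (n : ℕ) {x : ℤ}
    (hx : 0 ≤ x) : areaLaplace β α E n x ≠ ⊤ := by
  refine ne_top_of_le_ne_top (ENNReal.pow_ne_top ?_) (areaLaplace_le_pow hα E n hx)
  rw [← ENNReal.ofReal_tsum_of_nonneg (fun k => (pb_pos hβ k).le) (summable_pb hβ)]
  exact ENNReal.ofReal_ne_top

lemma areaLaplace_succ_ne_zero {β α : ℝ} (hβ : 0 < β) {E : ℤ → Prop} {n : ℕ}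
    (h : areaLaplace β α E n 0 ≠ 0) (x : ℤ) : areaLaplace β α E (n + 1) x ≠ 0 := by
  refine mul_ne_zero (by simp [Real.exp_pos]) fun hsum => ?_
  have h0 := ENNReal.tsum_eq_zero.mp hsum 0
  simp only [killedKernel, le_refl, if_true, mul_eq_zero, ENNReal.ofReal_eq_zero] at h0
  exact h0.elim (pb_pos hβ _).not_ge h

lemma areaLaplace_ne_zero_at_zero {β α : ℝ} (hβ : 0 < β) {E : ℤ → Prop} (hE : E 0) :
    ∀ n, areaLaplace β α E n 0 ≠ 0
  | 0 => by simp [areaLaplace, hE]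
  | n + 1 => areaLaplace_succ_ne_zero hβ (areaLaplace_ne_zero_at_zero hβ hE n) 0

lemma areaLaplace_ne_zero {β α : ℝ} (hβ : 0 < β) {E : ℤ → Prop} (hE : ∀ z, E z) :
    ∀ n x, areaLaplace β α E n x ≠ 0
  | 0, x => by simp [areaLaplace, hE x, Real.exp_pos]
  | n + 1, x => areaLaplace_succ_ne_zero hβ (areaLaplace_ne_zero_at_zero hβ (hE 0) n) x

lemma valx_cons_succ (x z : ℤ) {n : ℕ} (Y : Fin n → ℤ) {j : ℕ} (hj : j ≤ n) :
    valx x (Fin.cons z Y) (j + 1) = valx z Y j := by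
  rcases j with _ | j
  · simp [valx]
  · rw [valx, valx, dif_pos (by omega), dif_pos (by omega)]
    exact Fin.cons_succ (α := fun _ => ℤ) z Y ⟨j, by omega⟩

lemma wt_cons (β : ℝ) (x z : ℤ) {n : ℕ} (Y : Fin n → ℤ) :
    wt β x (Fin.cons z Y) = pb β (z - x) * wt β z Y := by
  rw [wt, wt, ← Finset.mul_prod_Ioc_eq_prod_Icc (by omega), ← Finset.Icc_add_one_left_eq_Ioc,
    ← Finset.map_add_right_Icc, Finset.prod_map]
  congr 1
  refine Finset.prod_congr rfl fun k hk => ?_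
  obtain ⟨hk1, hkn⟩ := Finset.mem_Icc.mp hk
  obtain ⟨j, rfl⟩ : ∃ j, k = j + 1 := ⟨k - 1, by omega⟩
  simp only [addRightEmbedding_apply, Nat.add_sub_cancel, valx_cons_succ x z Y hkn,
    valx_cons_succ x z Y (Nat.le_of_succ_le hkn)]

lemma area_cons (x z : ℤ) {n : ℕ} (Y : Fin n → ℤ) :
    area x (Fin.cons z Y) = x + area z Y := by
  simp [area, Fin.sum_cons]

lemma forall_cons_nonneg (z : ℤ) {n : ℕ} (Y : Fin n → ℤ) :
    (∀ k, 0 ≤ (Fin.cons z Y : Fin (n + 1) → ℤ) k) ↔ 0 ≤ z ∧ ∀ k, 0 ≤ Y k :=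
  Fin.forall_fin_succ.trans (by simp)

def pathWeight (β α : ℝ) (E : ℤ → Prop) (x : ℤ) {n : ℕ} (X : Fin n → ℤ) : ℝ≥0∞ :=
  ENNReal.ofReal (Real.exp (-α * area x X) * wt β x X) *
    if (∀ k, 0 ≤ X k) ∧ E (valx x X n) then 1 else 0

lemma pathWeight_cons {β : ℝ} (hβ : 0 < β) (α : ℝ) (E : ℤ → Prop) (x z : ℤ) {n : ℕ}
    (Y : Fin n → ℤ) : pathWeight β α E x (Fin.cons z Y) =
      ENNReal.ofReal (Real.exp (-α * x)) * (killedKernel β x z * pathWeight β α E z Y) := by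
  unfold pathWeight killedKernel
  simp only [forall_cons_nonneg, valx_cons_succ x z Y le_rfl, area_cons, wt_cons]
  by_cases hz : 0 ≤ z
  · simp only [hz, true_and, if_true]
    rw [← mul_assoc, ← mul_assoc, ← ENNReal.ofReal_mul (Real.exp_pos _).le, ← mul_assoc,
      ← ENNReal.ofReal_mul (mul_nonneg (Real.exp_pos _).le (pb_pos hβ _).le)]
    congr 2
    push_cast
    rw [mul_add, Real.exp_add]
    ring
  · simp [hz]

lemma tsum_pathWeight {β : ℝ} (hβ : 0 < β) (α : ℝ) (E : ℤ → Prop) :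
    ∀ (n : ℕ) (x : ℤ), ∑' X : Fin n → ℤ, pathWeight β α E x X = areaLaplace β α E n x
  | 0, x => by simp [pathWeight, areaLaplace, area, wt, valx]
  | n + 1, x => by
    rw [← (Fin.consEquiv fun _ => ℤ).tsum_eq, ENNReal.tsum_prod', areaLaplace,
      ← ENNReal.tsum_mul_left]
    refine tsum_congr fun z => ?_
    simp only [Fin.consEquiv, Equiv.coe_fn_mk, pathWeight_cons hβ, ENNReal.tsum_mul_left,
      tsum_pathWeight hβ α E n z]

lemma Ewalk_eq_toReal_areaLaplace {β : ℝ} (hβ : 0 < β) (α : ℝ) {E : ℤ → Prop} {n : ℕ}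
    {P : (Fin n → ℤ) → Prop} [DecidablePred P] (x : ℤ)
    (hP : ∀ X, P X ↔ (∀ k, 0 ≤ X k) ∧ E (valx x X n)) :
    Ewalk β x n (fun I => Real.exp (-α * area x I) * if P I then 1 else 0) =
      (areaLaplace β α E n x).toReal := by
  rw [← tsum_pathWeight hβ, ENNReal.tsum_toReal_eq fun X => ?_, Ewalk]
  · refine tsum_congr fun X => ?_
    have hwt : 0 ≤ wt β x X := Finset.prod_nonneg fun k _ => (pb_pos hβ _).le
    by_cases hX : P X
    · simp [pathWeight, hX, (hP X).mp hX, ENNReal.toReal_ofReal, hwt, Real.exp_nonneg]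
    · simp [pathWeight, hX, (not_congr (hP X)).mp hX]
  · exact ENNReal.mul_ne_top ENNReal.ofReal_ne_top (by split_ifs <;> simp)

lemma Ewalk_ratio_antitone {β α : ℝ} (hβ : 0 < β) (hα : 0 ≤ α) {E : ℤ → Prop} {n : ℕ}
    {P : (Fin n → ℤ) → Prop} [DecidablePred P]
    (hP : ∀ x X, P X ↔ (∀ k, 0 ≤ X k) ∧ E (valx x X n))
    (hpos : ∀ x, areaLaplace β 0 E n x ≠ 0) {x y : ℤ} (hx : 0 ≤ x) (hxy : x ≤ y) :
    (Ewalk β y n fun I => Real.exp (-α * area y I) * if P I then 1 else 0) /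
        (Ewalk β y n fun I => if P I then 1 else 0) ≤
      (Ewalk β x n fun I => Real.exp (-α * area x I) * if P I then 1 else 0) /
        (Ewalk β x n fun I => if P I then 1 else 0) := by
  have hden : ∀ s, (Ewalk β s n fun I => if P I then 1 else 0) =
      Ewalk β s n fun I => Real.exp (-0 * area s I) * if P I then 1 else 0 := by
    simp
  have hy : 0 ≤ y := hx.trans hxy
  rw [hden, hden, Ewalk_eq_toReal_areaLaplace hβ _ _ (hP x), Ewalk_eq_toReal_areaLaplace hβ _ _ (hP x),
    Ewalk_eq_toReal_areaLaplace hβ _ _ (hP y), Ewalk_eq_toReal_areaLaplace hβ _ _ (hP y),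
    div_le_div_iff₀ (ENNReal.toReal_pos (hpos y) (areaLaplace_ne_top hβ le_rfl E n hy))
      (ENNReal.toReal_pos (hpos x) (areaLaplace_ne_top hβ le_rfl E n hx)),
    ← ENNReal.toReal_mul, ← ENNReal.toReal_mul]
  exact ENNReal.toReal_mono (ENNReal.mul_ne_top (areaLaplace_ne_top hβ hα E n hx)
    (areaLaplace_ne_top hβ le_rfl E n hy)) (areaLaplace_mul_le hβ hα E n hxy)

/-- `x ↦ E_{β,x}[e^{−α A_m(I)} | I ∈ B^+_m]` is non-increasing on `ℕ₀`,
and the same holds when conditioning on `B^{0,+}_m`. -/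
theorem statement14 (β α : ℝ) (hβ : 0 < β) (hα : 0 < α) (m : ℕ) :
    (∀ x y : ℕ, x ≤ y →
      (Ewalk β (y : ℤ) m fun I =>
          Real.exp (-α * (area (y : ℤ) I : ℝ)) * (if (∀ k : Fin m, 0 ≤ I k) then 1 else 0)) /
          (Ewalk β (y : ℤ) m fun I => if (∀ k : Fin m, 0 ≤ I k) then 1 else 0) ≤
        (Ewalk β (x : ℤ) m fun I =>
            Real.exp (-α * (area (x : ℤ) I : ℝ)) * (if (∀ k : Fin m, 0 ≤ I k) then 1 else 0)) /
          (Ewalk β (x : ℤ) m fun I => if (∀ k : Fin m, 0 ≤ I k) then 1 else 0)) ∧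
    (∀ x y : ℕ, x ≤ y →
      (Ewalk β (y : ℤ) m fun I =>
          Real.exp (-α * (area (y : ℤ) I : ℝ)) * (if inB0 I then 1 else 0)) /
          (Ewalk β (y : ℤ) m fun I => if inB0 I then 1 else 0) ≤
        (Ewalk β (x : ℤ) m fun I =>
            Real.exp (-α * (area (x : ℤ) I : ℝ)) * (if inB0 I then 1 else 0)) /
          (Ewalk β (x : ℤ) m fun I => if inB0 I then 1 else 0)) := by
  refine ⟨fun x y hxy => ?_, fun x y hxy => ?_⟩
  · exact Ewalk_ratio_antitone hβ hα.le (E := fun _ => True) (by simp)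
      (areaLaplace_ne_zero hβ (fun _ => trivial) m) (Int.natCast_nonneg x) (by exact_mod_cast hxy)
  · cases m with
    | zero =>
      -- the endpoint condition `valx 0 X 0 = 0` in `inB0` holds trivially
      exact Ewalk_ratio_antitone hβ hα.le (E := fun _ => True) (fun s X => by simp [inB0, valx])
        (areaLaplace_ne_zero hβ (fun _ => trivial) 0) (Int.natCast_nonneg x) (by exact_mod_cast hxy)
    | succ n =>
      exact Ewalk_ratio_antitone hβ hα.le (E := (· = 0)) (fun s X => by simp [inB0, valx, and_comm])
        (areaLaplace_succ_ne_zero hβ (areaLaplace_ne_zero_at_zero (E := (· = 0)) hβ rfl n))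
        (Int.natCast_nonneg x) (by exact_mod_cast hxy)

end
end

section
/- Let β > 0, N ∈ ℕ, and let A ⊆ ℤ^N satisfy P_{β,0}(X ∈ A) > 0 and be closed under coordinatewise minimum and coordinatewise maximum (for all u,v ∈ A, u∧v ∈ A and u∨v ∈ A). Let f,g : A → ℝ be two non-negative bounded functions that are both non-increasing (or both non-decreasing) with respect to the coordinatewise partial order on ℤ^N. Then E_{β,0}[ f(X) g(X) | X ∈ A ] ≥ E_{β,0}[ f(X) | X ∈ A ] · E_{β,0}[ g(X) | X ∈ A ]. -/
open Filter

attribute [local instance] Classical.propDecidable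

noncomputable section

/-!
The weight of a path of the walk is a product of factors `P_β(X_k - X_{k-1})`. Replacing two
paths `u`, `v` by `u ⊓ v` and `u ⊔ v` does not increase the total absolute size of each pair of
increments, and `P_β` is decreasing in `|k|`, so the weight is log-supermodular on `ℤ^N`;
multiplying by the indicator of the lattice-closed set `A` keeps it so. The FKG inequality for
such a weight follows from the Ahlswede–Daykin four functions theorem on finite sets by passing
to the limit along finite partial sums.
-/

section FKG

open Finset

variable {α : Type*} {s : Set α} {μ f : α → ℝ}

theorem mul_nonneg_of_eq_zero_of_notMem (hμ₀ : 0 ≤ μ) (hμs : ∀ a ∉ s, μ a = 0)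
    (hf₀ : ∀ a ∈ s, 0 ≤ f a) (a : α) : 0 ≤ μ a * f a := by
  by_cases ha : a ∈ s
  · exact mul_nonneg (hμ₀ a) (hf₀ a ha)
  · simp [hμs a ha]

theorem summable_mul_of_eq_zero_of_notMem {M : ℝ} (hμ : Summable μ) (hμ₀ : 0 ≤ μ)
    (hμs : ∀ a ∉ s, μ a = 0) (hf₀ : ∀ a ∈ s, 0 ≤ f a) (hfM : ∀ a ∈ s, f a ≤ M) :
    Summable fun a => μ a * f a := by
  refine (hμ.mul_right M).of_nonneg_of_le (mul_nonneg_of_eq_zero_of_notMem hμ₀ hμs hf₀)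
    fun a => ?_
  by_cases ha : a ∈ s
  · exact mul_le_mul_of_nonneg_left (hfM a ha) (hμ₀ a)
  · simp [hμs a ha]

variable [DistribLattice α]

theorem four_functions_theorem_tsum (f₁ f₂ f₃ f₄ : α → ℝ)
    (h₁ : 0 ≤ f₁) (h₂ : 0 ≤ f₂) (h₃ : 0 ≤ f₃) (h₄ : 0 ≤ f₄)
    (hs₁ : Summable f₁) (hs₂ : Summable f₂) (hs₃ : Summable f₃) (hs₄ : Summable f₄)
    (h : ∀ a b, f₁ a * f₂ b ≤ f₃ (a ⊓ b) * f₄ (a ⊔ b)) :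
    (∑' a, f₁ a) * ∑' a, f₂ a ≤ (∑' a, f₃ a) * ∑' a, f₄ a := by
  classical
  have hpartial : ∀ s : Finset α,
      (∑ a ∈ s, f₁ a) * ∑ a ∈ s, f₂ a ≤ (∑' a, f₃ a) * ∑' a, f₄ a := fun s =>
    (four_functions_theorem f₁ f₂ f₃ f₄ h₁ h₂ h₃ h₄ h s s).trans <|
      mul_le_mul (hs₃.sum_le_tsum _ fun a _ => h₃ a) (hs₄.sum_le_tsum _ fun a _ => h₄ a)
        (sum_nonneg fun a _ => h₄ a) (tsum_nonneg h₃)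
  have hlim₁ : Tendsto (fun s : Finset α => ∑ a ∈ s, f₁ a) atTop (nhds (∑' a, f₁ a)) :=
    hs₁.hasSum
  exact le_of_tendsto (hlim₁.mul hs₂.hasSum) (Eventually.of_forall hpartial)

theorem fkg_tsum_of_monotoneOn {g : α → ℝ} (hμ₀ : 0 ≤ μ) (hμs : ∀ a ∉ s, μ a = 0)
    (hμ : ∀ a b, μ a * μ b ≤ μ (a ⊓ b) * μ (a ⊔ b))
    (hf₀ : ∀ a ∈ s, 0 ≤ f a) (hg₀ : ∀ a ∈ s, 0 ≤ g a) (hf : MonotoneOn f s) (hg : MonotoneOn g s)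
    (hsμ : Summable μ) (hsf : Summable fun a => μ a * f a) (hsg : Summable fun a => μ a * g a)
    (hsfg : Summable fun a => μ a * (f a * g a)) :
    (∑' a, μ a * f a) * ∑' a, μ a * g a ≤ (∑' a, μ a) * ∑' a, μ a * (f a * g a) := by
  have hfg₀ : ∀ a ∈ s, 0 ≤ f a * g a := fun a ha => mul_nonneg (hf₀ a ha) (hg₀ a ha)
  have hnonneg {h : α → ℝ} (hh : ∀ a ∈ s, 0 ≤ h a) : ∀ a, 0 ≤ μ a * h a :=
    mul_nonneg_of_eq_zero_of_notMem hμ₀ hμs hh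
  refine four_functions_theorem_tsum _ _ _ _ (hnonneg hf₀) (hnonneg hg₀) hμ₀ (hnonneg hfg₀)
    hsf hsg hsμ hsfg fun a b => ?_
  have hrhs : 0 ≤ μ (a ⊓ b) * (μ (a ⊔ b) * (f (a ⊔ b) * g (a ⊔ b))) :=
    mul_nonneg (hμ₀ _) (hnonneg hfg₀ _)
  by_cases hab : μ a * μ b = 0
  · calc μ a * f a * (μ b * g b) = μ a * μ b * (f a * g b) := by ring
      _ ≤ _ := by rw [hab, zero_mul]; exact hrhs
  -- log-supermodularity keeps `a ⊔ b` in the support of `μ`, hence in `s`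
  have hmem : ∀ c, μ c ≠ 0 → c ∈ s := fun c hc => by_contra fun h => hc (hμs c h)
  have hsup : μ (a ⊔ b) ≠ 0 := fun h => hab <| le_antisymm (by simpa [h] using hμ a b)
    (mul_nonneg (hμ₀ a) (hμ₀ b))
  have ha := hmem a (left_ne_zero_of_mul hab)
  have hb := hmem b (right_ne_zero_of_mul hab)
  have hab' := hmem _ hsup
  calc μ a * f a * (μ b * g b) = μ a * μ b * (f a * g b) := by ring
    _ ≤ μ (a ⊓ b) * μ (a ⊔ b) * (f (a ⊔ b) * g (a ⊔ b)) :=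
        mul_le_mul (hμ a b) (mul_le_mul (hf ha hab' le_sup_left) (hg hb hab' le_sup_right)
          (hg₀ b hb) (hf₀ _ hab')) (mul_nonneg (hf₀ a ha) (hg₀ b hb))
          (mul_nonneg (hμ₀ _) (hμ₀ _))
    _ = μ (a ⊓ b) * (μ (a ⊔ b) * (f (a ⊔ b) * g (a ⊔ b))) := by ring

theorem fkg_tsum_of_antitoneOn {g : α → ℝ} (hμ₀ : 0 ≤ μ) (hμs : ∀ a ∉ s, μ a = 0)
    (hμ : ∀ a b, μ a * μ b ≤ μ (a ⊓ b) * μ (a ⊔ b))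
    (hf₀ : ∀ a ∈ s, 0 ≤ f a) (hg₀ : ∀ a ∈ s, 0 ≤ g a) (hf : AntitoneOn f s) (hg : AntitoneOn g s)
    (hsμ : Summable μ) (hsf : Summable fun a => μ a * f a) (hsg : Summable fun a => μ a * g a)
    (hsfg : Summable fun a => μ a * (f a * g a)) :
    (∑' a, μ a * f a) * ∑' a, μ a * g a ≤ (∑' a, μ a) * ∑' a, μ a * (f a * g a) :=
  fkg_tsum_of_monotoneOn (α := αᵒᵈ) hμ₀ hμs (fun a b => (hμ a b).trans_eq (mul_comm _ _))
    hf₀ hg₀ hf.dual_left hg.dual_left hsμ hsf hsg hsfg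

theorem IsSublattice.indicator_mul_le (hs : IsSublattice s) (hμ₀ : 0 ≤ μ)
    (hμ : ∀ a b, μ a * μ b ≤ μ (a ⊓ b) * μ (a ⊔ b)) (a b : α) :
    s.indicator μ a * s.indicator μ b ≤ s.indicator μ (a ⊓ b) * s.indicator μ (a ⊔ b) := by
  by_cases hab : a ∈ s ∧ b ∈ s
  · simpa [Set.indicator_of_mem, hab.1, hab.2, hs.infClosed hab.1 hab.2,
      hs.supClosed hab.1 hab.2] using hμ a b
  · have h0 : s.indicator μ a * s.indicator μ b = 0 := by
      rcases not_and_or.1 hab with h | h <;> simp [h]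
    rw [h0]
    exact mul_nonneg (Set.indicator_nonneg (fun c _ => hμ₀ c) _)
      (Set.indicator_nonneg (fun c _ => hμ₀ c) _)

end FKG

theorem abs_min_sub_min_add_abs_max_sub_max_le (a b c d : ℤ) :
    |min a b - min c d| + |max a b - max c d| ≤ |a - c| + |b - d| := by
  simp only [abs_eq_max_neg]
  omega

section Walk

variable {β : ℝ}

theorem cb_nonneg (hβ : 0 ≤ β) : 0 ≤ cb β := by
  have h : Real.exp (-β / 2) ≤ 1 := Real.exp_le_one_iff.2 (by linarith)
  exact div_nonneg (by positivity) (by linarith)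

theorem pb_nonneg (hβ : 0 ≤ β) (k : ℤ) : 0 ≤ pb β k :=
  div_nonneg (Real.exp_pos _).le (cb_nonneg hβ)

theorem pb_mul_pb_le (hβ : 0 ≤ β) {j₁ j₂ k₁ k₂ : ℤ} (h : |j₁| + |j₂| ≤ |k₁| + |k₂|) :
    pb β k₁ * pb β k₂ ≤ pb β j₁ * pb β j₂ := by
  simp only [pb, div_mul_div_comm, ← Real.exp_add]
  refine div_le_div_of_nonneg_right (Real.exp_le_exp.2 ?_) (mul_self_nonneg _)
  have h' : |(j₁ : ℝ)| + |(j₂ : ℝ)| ≤ |(k₁ : ℝ)| + |(k₂ : ℝ)| := by exact_mod_cast h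
  nlinarith

theorem valx_sup {n : ℕ} (u v : Fin n → ℤ) (k : ℕ) :
    valx 0 (u ⊔ v) k = max (valx 0 u k) (valx 0 v k) := by
  unfold valx; split_ifs <;> simp

theorem valx_inf {n : ℕ} (u v : Fin n → ℤ) (k : ℕ) :
    valx 0 (u ⊓ v) k = min (valx 0 u k) (valx 0 v k) := by
  unfold valx; split_ifs <;> simp

theorem wt_nonneg (hβ : 0 ≤ β) (x : ℤ) {n : ℕ} (X : Fin n → ℤ) : 0 ≤ wt β x X :=
  Finset.prod_nonneg fun _ _ => pb_nonneg hβ _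

theorem wt_mul_wt_le_wt_inf_mul_wt_sup (hβ : 0 ≤ β) {n : ℕ} (u v : Fin n → ℤ) :
    wt β 0 u * wt β 0 v ≤ wt β 0 (u ⊓ v) * wt β 0 (u ⊔ v) := by
  simp only [wt, ← Finset.prod_mul_distrib]
  refine Finset.prod_le_prod (fun k _ => mul_nonneg (pb_nonneg hβ _) (pb_nonneg hβ _))
    fun k _ => pb_mul_pb_le hβ ?_
  simp only [valx_inf, valx_sup]
  exact abs_min_sub_min_add_abs_max_sub_max_le _ _ _ _

theorem Ewalk_ite_mem_eq_tsum {n : ℕ} (A : Set (Fin n → ℤ)) (F : (Fin n → ℤ) → ℝ) :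
    (Ewalk β 0 n fun X => if X ∈ A then F X else 0) = ∑' X, A.indicator (wt β 0) X * F X := by
  refine tsum_congr fun X => ?_
  by_cases hX : X ∈ A <;> simp [hX, mul_comm]

end Walk

/-- a conditional FKG inequality for the random walk with step law `P_β`,
on a set `A ⊆ ℤ^N` closed under coordinatewise min and max, for two non-negative
bounded functions that are both non-increasing or both non-decreasing on `A`. -/
theorem statement16 (β : ℝ) (hβ : 0 < β) (N : ℕ) (A : Set (Fin N → ℤ))
    (f g : (Fin N → ℤ) → ℝ)
    (hPA : 0 < Ewalk β 0 N fun X => if X ∈ A then 1 else 0)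
    (hmin : ∀ u ∈ A, ∀ v ∈ A, (fun k => min (u k) (v k)) ∈ A)
    (hmax : ∀ u ∈ A, ∀ v ∈ A, (fun k => max (u k) (v k)) ∈ A)
    (hf0 : ∀ u ∈ A, 0 ≤ f u) (hg0 : ∀ u ∈ A, 0 ≤ g u)
    (hfbd : ∃ M : ℝ, ∀ u ∈ A, f u ≤ M) (hgbd : ∃ M : ℝ, ∀ u ∈ A, g u ≤ M)
    (hmono : (∀ u ∈ A, ∀ v ∈ A, u ≤ v → f v ≤ f u ∧ g v ≤ g u) ∨
             (∀ u ∈ A, ∀ v ∈ A, u ≤ v → f u ≤ f v ∧ g u ≤ g v)) :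
    (Ewalk β 0 N fun X => if X ∈ A then f X else 0) /
        (Ewalk β 0 N fun X => if X ∈ A then 1 else 0) *
      ((Ewalk β 0 N fun X => if X ∈ A then g X else 0) /
        (Ewalk β 0 N fun X => if X ∈ A then 1 else 0)) ≤
    (Ewalk β 0 N fun X => if X ∈ A then f X * g X else 0) /
      (Ewalk β 0 N fun X => if X ∈ A then 1 else 0) := by
  obtain ⟨Mf, hMf⟩ := hfbd
  obtain ⟨Mg, hMg⟩ := hgbd
  rw [Ewalk_ite_mem_eq_tsum] at hPA
  rw [Ewalk_ite_mem_eq_tsum, Ewalk_ite_mem_eq_tsum, Ewalk_ite_mem_eq_tsum, Ewalk_ite_mem_eq_tsum]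
  simp only [mul_one] at hPA ⊢
  set μ := A.indicator (wt β 0)
  have hA : IsSublattice A := ⟨fun u hu v hv => hmax u hu v hv, fun u hu v hv => hmin u hu v hv⟩
  have hμ₀ : 0 ≤ μ := Set.indicator_nonneg fun X _ => wt_nonneg hβ.le 0 X
  have hμs : ∀ X ∉ A, μ X = 0 := fun X hX => Set.indicator_of_notMem hX _
  have hμ := hA.indicator_mul_le (wt_nonneg hβ.le 0) (wt_mul_wt_le_wt_inf_mul_wt_sup hβ.le)
  have hsμ : Summable μ := by_contra fun h => hPA.ne' (tsum_eq_zero_of_not_summable h)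
  have hfg0 : ∀ u ∈ A, 0 ≤ f u * g u := fun u hu => mul_nonneg (hf0 u hu) (hg0 u hu)
  have hfgM : ∀ u ∈ A, f u * g u ≤ Mf * Mg := fun u hu =>
    mul_le_mul (hMf u hu) (hMg u hu) (hg0 u hu) ((hf0 u hu).trans (hMf u hu))
  have hsf := summable_mul_of_eq_zero_of_notMem hsμ hμ₀ hμs hf0 hMf
  have hsg := summable_mul_of_eq_zero_of_notMem hsμ hμ₀ hμs hg0 hMg
  have hsfg := summable_mul_of_eq_zero_of_notMem hsμ hμ₀ hμs hfg0 hfgM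
  have key : (∑' X, μ X * f X) * ∑' X, μ X * g X ≤ (∑' X, μ X) * ∑' X, μ X * (f X * g X) := by
    rcases hmono with hanti | hmono
    · exact fkg_tsum_of_antitoneOn hμ₀ hμs hμ hf0 hg0
        (fun u hu v hv huv => (hanti u hu v hv huv).1)
        (fun u hu v hv huv => (hanti u hu v hv huv).2) hsμ hsf hsg hsfg
    · exact fkg_tsum_of_monotoneOn hμ₀ hμs hμ hf0 hg0
        (fun u hu v hv huv => (hmono u hu v hv huv).1)
        (fun u hu v hv huv => (hmono u hu v hv huv).2) hsμ hsf hsg hsfg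
  rw [div_mul_div_comm, div_le_div_iff₀ (mul_pos hPA hPA) hPA]
  nlinarith [mul_le_mul_of_nonneg_right key hPA.le]

end
end

section
/- For every β > 0 and δ ≥ 0: (i) the constrained partition function is supermultiplicative, i.e. Z^{+,c}_{L_1+L_2,β,δ} ≥ Z^{+,c}_{L_1,β,δ} · Z^{+,c}_{L_2,β,δ} for all L_1, L_2 ≥ 1; (ii) for every L ≥ 1, (1/L²)·(Z^+_{L,β,δ})² ≤ Z^{+,c}_{2L,β,δ} ≤ Z^+_{2L,β,δ}. -/
open Filter

attribute [local instance] Classical.propDecidable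

noncomputable section

/-- The partial sum `Σ_{i=1}^k ℓ_i`. -/
def psum {n : ℕ} (ℓ : Fin n → ℤ) (k : ℕ) : ℤ :=
  ∑ i ∈ Finset.univ.filter (fun i : Fin n => (i : ℕ) < k), ℓ i

/-- `ℓ_i` for `1 ≤ i ≤ n`, with the convention `ℓ_0 = ℓ_{n+1} = 0`. -/
def lext {n : ℕ} (ℓ : Fin n → ℤ) (i : ℕ) : ℤ :=
  if h : 1 ≤ i ∧ i ≤ n then ℓ ⟨i - 1, by omega⟩ else 0

/-- `x ∧~ y := min(|x|,|y|)·1{xy ≤ 0}`. -/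
def twedge (x y : ℤ) : ℤ := if x * y ≤ 0 then min |x| |y| else 0

/-- The Hamiltonian `H(ℓ) = β Σ_{i=0}^n ℓ_i ∧~ ℓ_{i+1} + δ Σ_{k=1}^n 1{Σ_{i=1}^k ℓ_i = 0}`. -/
def Ham (β δ : ℝ) {n : ℕ} (ℓ : Fin n → ℤ) : ℝ :=
  β * ((∑ i ∈ Finset.range (n + 1), twedge (lext ℓ i) (lext ℓ (i + 1)) : ℤ) : ℝ) +
    δ * ((((Finset.Icc 1 n).filter (fun k => psum ℓ k = 0)).card : ℕ) : ℝ)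

/-- The number of contacts with the wall, `Σ_{k=1}^n 1{Σ_{i=1}^k ℓ_i = 0}`. -/
def contacts {n : ℕ} (ℓ : Fin n → ℤ) : ℕ :=
  ((Finset.Icc 1 n).filter (fun k => psum ℓ k = 0)).card

/-- Membership in `L^+_{N,L}`. -/
def inConf (L N : ℕ) (ℓ : Fin N → ℤ) : Prop :=
  (∑ i, |ℓ i|) = (L : ℤ) - (N : ℤ) ∧ ∀ k : Fin N, 0 ≤ psum ℓ ((k : ℕ) + 1)

/-- The (free) partition function `Z^+_{L,β,δ}`. -/
def Zplus (β δ : ℝ) (L : ℕ) : ℝ :=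
  ∑ N ∈ Finset.Icc 1 L, ∑' ℓ : Fin N → ℤ,
    if inConf L N ℓ then Real.exp (Ham β δ ℓ) else 0

/-- The constrained partition function `Z^{+,c}_{L,β,δ}`. -/
def Zplusc (β δ : ℝ) (L : ℕ) : ℝ :=
  ∑ N ∈ Finset.Icc 1 L, ∑' ℓ : Fin N → ℤ,
    if inConf L N ℓ ∧ psum ℓ N = 0 then Real.exp (Ham β δ ℓ) else 0

/-!
Both inequalities come from gluing paths. A configuration in `L^+_{N,L}` is the sequence of
increments of a non-negative path with `N` steps and size `N + Σ|ℓ_i| = L`. Concatenating two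
paths that return to `0` gives such a path of the summed size; the interaction term only gains
the junction term `ℓ_N ∧~ ℓ'_1 ≥ 0` and the contacts add up, so for `β, δ ≥ 0` the Hamiltonian is
superadditive, and the gluing is injective because the size of the first factor locates the
splitting point. For the lower bound, split `Z^+_L` according to the endpoint `a ∈ [0, L)` of the
path and pick the `a` with the largest contribution `Z_a`, so that `Z^+_L ≤ L Z_a`. Gluing a path
ending at `a` to the reversed and negated increments of another one gives a path of size `2L`
returning to `0`, again without loss in the Hamiltonian, hence `Z_a² ≤ Z^{+,c}_{2L}`.
-/

lemma Finset.sum_le_sum_of_injOn {ι κ M : Type*} [AddCommMonoid M] [PartialOrder M]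
    [IsOrderedAddMonoid M] {s : Finset ι} {t : Finset κ} {f : ι → M} {g : κ → M} (e : ι → κ)
    (he : Set.InjOn e s) (hst : Set.MapsTo e s t)
    (hg : ∀ j ∈ t, 0 ≤ g j) (hfg : ∀ i ∈ s, f i ≤ g (e i)) :
    ∑ i ∈ s, f i ≤ ∑ j ∈ t, g j :=
  calc ∑ i ∈ s, f i ≤ ∑ i ∈ s, g (e i) := Finset.sum_le_sum hfg
    _ = ∑ j ∈ s.image e, g j := (Finset.sum_image he).symm
    _ ≤ ∑ j ∈ t, g j :=
      Finset.sum_le_sum_of_subset_of_nonneg (Finset.image_subset_iff.mpr hst) fun j hj _ => hg j hj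

/-- The increments of the path of `ℓ`, traversed backwards. -/
def negRev {n : ℕ} (ℓ : Fin n → ℤ) : Fin n → ℤ := fun i => -ℓ i.rev

section Increments

variable {m n : ℕ}

lemma twedge_nonneg (x y : ℤ) : 0 ≤ twedge x y := by
  unfold twedge
  split_ifs
  exacts [le_min (abs_nonneg x) (abs_nonneg y), le_rfl]

lemma twedge_comm (x y : ℤ) : twedge x y = twedge y x := by
  simp only [twedge, mul_comm, min_comm]

lemma twedge_neg_neg (x y : ℤ) : twedge (-x) (-y) = twedge x y := by
  simp only [twedge, neg_mul_neg, abs_neg]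

@[simp] lemma twedge_zero_left (y : ℤ) : twedge 0 y = 0 := by simp [twedge]

@[simp] lemma twedge_zero_right (x : ℤ) : twedge x 0 = 0 := by simp [twedge]

@[simp] lemma lext_zero (ℓ : Fin n → ℤ) : lext ℓ 0 = 0 := by simp [lext]

lemma lext_of_lt {ℓ : Fin n → ℤ} {i : ℕ} (h : n < i) : lext ℓ i = 0 := by
  rw [lext, dif_neg (by omega)]

lemma lext_abs (ℓ : Fin n → ℤ) (i : ℕ) : lext (fun j => |ℓ j|) i = |lext ℓ i| := by
  unfold lext
  split_ifs <;> simp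

lemma lext_append (f : Fin m → ℤ) (g : Fin n → ℤ) (i : ℕ) :
    lext (Fin.append f g) i = if i ≤ m then lext f i else lext g (i - m) := by
  unfold lext
  split_ifs <;> try omega
  · exact Fin.append_left f g ⟨i - 1, by omega⟩
  · have := Fin.append_right f g ⟨i - m - 1, by omega⟩
    exact (congrArg (Fin.append f g) (Fin.ext (by simp; omega))).trans this

lemma lext_negRev (ℓ : Fin n → ℤ) (i : ℕ) : lext (negRev ℓ) i = -lext ℓ (n + 1 - i) := by
  unfold lext negRev
  split_ifs <;> try omega
  · exact congrArg (fun j => -ℓ j) (Fin.ext (by simp; omega))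

lemma negRev_negRev (ℓ : Fin n → ℤ) : negRev (negRev ℓ) = ℓ := by
  funext i
  simp [negRev]

end Increments

section PartialSums

variable {m n : ℕ}

@[simp] lemma psum_zero (ℓ : Fin n → ℤ) : psum ℓ 0 = 0 := by simp [psum]

lemma psum_succ (ℓ : Fin n → ℤ) (k : ℕ) : psum ℓ (k + 1) = psum ℓ k + lext ℓ (k + 1) := by
  rcases lt_or_ge k n with h | h
  · have hins : Finset.univ.filter (fun i : Fin n => (i : ℕ) < k + 1)
        = insert ⟨k, h⟩ (Finset.univ.filter fun i : Fin n => (i : ℕ) < k) := by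
      ext i
      simp only [Finset.mem_filter, Finset.mem_insert, Finset.mem_univ, true_and, Fin.ext_iff]
      omega
    rw [psum, psum, hins, Finset.sum_insert (by simp), add_comm, lext, dif_pos (by omega)]
    rfl
  · have heq : Finset.univ.filter (fun i : Fin n => (i : ℕ) < k + 1)
        = Finset.univ.filter fun i : Fin n => (i : ℕ) < k := by
      ext i
      simp only [Finset.mem_filter, Finset.mem_univ, true_and]
      omega
    rw [psum, psum, heq, lext_of_lt (by omega), add_zero]

lemma psum_eq_sum_range (ℓ : Fin n → ℤ) (k : ℕ) :
    psum ℓ k = ∑ i ∈ Finset.range k, lext ℓ (i + 1) := by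
  induction k with
  | zero => simp
  | succ k ih => rw [Finset.sum_range_succ, psum_succ, ih]

lemma psum_self (ℓ : Fin n → ℤ) : psum ℓ n = ∑ i, ℓ i := by
  rw [psum, Finset.filter_true_of_mem fun i _ => i.isLt]

lemma psum_append_of_le (f : Fin m → ℤ) (g : Fin n → ℤ) {k : ℕ} (hk : k ≤ m) :
    psum (Fin.append f g) k = psum f k := by
  simp only [psum_eq_sum_range]
  refine Finset.sum_congr rfl fun i hi => ?_
  rw [lext_append, if_pos (by simp at hi; omega)]

lemma psum_append_add (f : Fin m → ℤ) (g : Fin n → ℤ) (j : ℕ) :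
    psum (Fin.append f g) (m + j) = psum f m + psum g j := by
  rw [psum_eq_sum_range, Finset.sum_range_add, ← psum_eq_sum_range, psum_append_of_le f g le_rfl,
    psum_eq_sum_range g]
  congr 1
  refine Finset.sum_congr rfl fun i _ => ?_
  rw [lext_append, if_neg (by omega)]
  congr 1
  omega

lemma psum_negRev (ℓ : Fin n → ℤ) {k : ℕ} (hk : k ≤ n) :
    psum (negRev ℓ) k = psum ℓ (n - k) - psum ℓ n := by
  have hsplit := Finset.sum_range_add (fun i => lext ℓ (i + 1)) (n - k) k
  rw [Nat.sub_add_cancel hk] at hsplit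
  rw [psum_eq_sum_range, psum_eq_sum_range ℓ (n - k), psum_eq_sum_range ℓ n, hsplit,
    ← Finset.sum_range_reflect]
  simp only [lext_negRev, Finset.sum_neg_distrib]
  rw [sub_add_cancel_left, neg_inj]
  refine Finset.sum_congr rfl fun i hi => ?_
  simp only [Finset.mem_range] at hi
  congr 1
  omega

lemma strictMono_add_psum_abs (ℓ : Fin n → ℤ) :
    StrictMono fun k : ℕ => (k : ℤ) + psum (fun i => |ℓ i|) k :=
  strictMono_nat_of_lt_succ fun k => by
    rw [psum_succ, lext_abs]
    push_cast
    linarith [abs_nonneg (lext ℓ (k + 1))]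

lemma psum_abs_append (f : Fin m → ℤ) (g : Fin n → ℤ) :
    psum (fun i => |Fin.append f g i|) m = ∑ i, |f i| := by
  have habs : (fun i => |Fin.append f g i|) = Fin.append (fun i => |f i|) (fun i => |g i|) := by
    funext i
    refine Fin.addCases (fun i => ?_) (fun i => ?_) i <;> simp
  rw [habs, psum_append_of_le _ _ le_rfl, psum_self]

end PartialSums

/-- The interaction part of the Hamiltonian, `Σ_{i=0}^{n} ℓ_i ∧~ ℓ_{i+1}`. -/
def wedgeSum {n : ℕ} (ℓ : Fin n → ℤ) : ℤ :=
  ∑ i ∈ Finset.range (n + 1), twedge (lext ℓ i) (lext ℓ (i + 1))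

section Hamiltonian

variable {m n : ℕ}

lemma Ham_eq (β δ : ℝ) (ℓ : Fin n → ℤ) :
    Ham β δ ℓ = β * wedgeSum ℓ + δ * contacts ℓ := rfl

lemma wedgeSum_negRev (ℓ : Fin n → ℤ) : wedgeSum (negRev ℓ) = wedgeSum ℓ := by
  rw [wedgeSum, ← Finset.sum_range_reflect]
  refine Finset.sum_congr rfl fun i hi => ?_
  simp only [Finset.mem_range] at hi
  rw [lext_negRev, lext_negRev, twedge_neg_neg, twedge_comm]
  congr 2 <;> omega

lemma wedgeSum_add_le_wedgeSum_append (f : Fin m → ℤ) (g : Fin n → ℤ) :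
    wedgeSum f + wedgeSum g ≤ wedgeSum (Fin.append f g) := by
  have hf : wedgeSum f = ∑ i ∈ Finset.range m, twedge (lext f i) (lext f (i + 1)) := by
    rw [wedgeSum, Finset.sum_range_succ, lext_of_lt (i := m + 1) (by omega), twedge_zero_right,
      add_zero]
  rw [hf, wedgeSum, wedgeSum, add_assoc m n 1, Finset.sum_range_add _ m]
  gcongr with i hi j
  · simp only [Finset.mem_range] at hi
    rw [lext_append, lext_append, if_pos (by omega), if_pos (by omega)]
  · -- the junction term `ℓ_m ∧~ ℓ_{m+1}` is dropped
    rcases Nat.eq_zero_or_pos j with rfl | hj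
    · simpa using twedge_nonneg _ _
    · rw [lext_append, lext_append, if_neg (by omega), if_neg (by omega)]
      exact le_of_eq (by congr 2 <;> omega)

lemma contacts_eq_sum_range (ℓ : Fin n → ℤ) :
    contacts ℓ = ∑ k ∈ Finset.range n, if psum ℓ (k + 1) = 0 then 1 else 0 := by
  rw [contacts, Finset.card_filter, ← Finset.Ico_add_one_right_eq_Icc, Finset.sum_Ico_eq_sum_range,
    Nat.add_sub_cancel]
  simp only [add_comm 1]

lemma contacts_append (f : Fin m → ℤ) (g : Fin n → ℤ) :
    contacts (Fin.append f g) =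
      contacts f + ∑ k ∈ Finset.range n, if psum f m + psum g (k + 1) = 0 then 1 else 0 := by
  rw [contacts_eq_sum_range, contacts_eq_sum_range, Finset.sum_range_add]
  congr 1
  · refine Finset.sum_congr rfl fun k hk => ?_
    rw [psum_append_of_le f g (by simp at hk; omega)]
  · simp only [add_assoc, psum_append_add]

lemma contacts_append_of_psum_eq_zero {f : Fin m → ℤ} (g : Fin n → ℤ) (hf : psum f m = 0) :
    contacts (Fin.append f g) = contacts f + contacts g := by
  rw [contacts_append, hf, contacts_eq_sum_range g]
  simp only [zero_add]

lemma contacts_add_le_contacts_append_negRev {f : Fin m → ℤ} {g : Fin n → ℤ}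
    (h : psum f m = psum g n) :
    contacts f + contacts g ≤ contacts (Fin.append f (negRev g)) := by
  have hrev : ∀ k ∈ Finset.range n, psum f m + psum (negRev g) (k + 1) = psum g (n - 1 - k) := by
    intro k hk
    simp only [Finset.mem_range] at hk
    rw [psum_negRev g (by omega), h, add_sub_cancel]
    congr 1
    omega
  rw [contacts_append, Finset.sum_congr rfl fun k hk => by rw [hrev k hk],
    Finset.sum_range_reflect (fun k => if psum g k = 0 then 1 else 0) n]
  gcongr
  -- both sides count the zeros of `k ↦ psum g k`, on `[1, n]` and on `[0, n - 1]` respectively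
  have hcount := Finset.sum_range_succ (fun k => if psum g k = 0 then 1 else 0) n
  rw [Finset.sum_range_succ', psum_zero, if_pos rfl, ← contacts_eq_sum_range] at hcount
  split_ifs at hcount <;> omega

lemma Ham_add_le_of_le {β δ : ℝ} (hβ : 0 ≤ β) (hδ : 0 ≤ δ) {a b c : ℕ}
    {x : Fin a → ℤ} {y : Fin b → ℤ} {z : Fin c → ℤ}
    (hw : wedgeSum x + wedgeSum y ≤ wedgeSum z) (hc : contacts x + contacts y ≤ contacts z) :
    Ham β δ x + Ham β δ y ≤ Ham β δ z := by
  simp only [Ham_eq]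
  have hw' : (wedgeSum x : ℝ) + wedgeSum y ≤ wedgeSum z := by exact_mod_cast hw
  have hc' : (contacts x : ℝ) + contacts y ≤ contacts z := by exact_mod_cast hc
  nlinarith

end Hamiltonian

section Configurations

variable {m n : ℕ}

lemma sum_abs_append (f : Fin m → ℤ) (g : Fin n → ℤ) :
    ∑ i, |Fin.append f g i| = ∑ i, |f i| + ∑ i, |g i| := by
  simp [Fin.sum_univ_add]

lemma sum_abs_negRev (ℓ : Fin n → ℤ) : ∑ i, |negRev ℓ i| = ∑ i, |ℓ i| := by
  simpa [negRev] using Fintype.sum_equiv Fin.revPerm (fun i => |ℓ i.rev|) (fun i => |ℓ i|)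
    fun i => rfl

lemma inConf_iff {L : ℕ} {ℓ : Fin n → ℤ} :
    inConf L n ℓ ↔ ∑ i, |ℓ i| = (L : ℤ) - n ∧ ∀ k ≤ n, 0 ≤ psum ℓ k := by
  refine and_congr_right fun _ => ⟨fun h k hk => ?_, fun h k => h _ k.isLt⟩
  rcases Nat.eq_zero_or_pos k with rfl | hk0
  · simp
  · simpa [Nat.sub_add_cancel hk0] using h ⟨k - 1, by omega⟩

lemma inConf_append {L₁ L₂ : ℕ} {f : Fin m → ℤ} {g : Fin n → ℤ}
    (hf : inConf L₁ m f) (hg : inConf L₂ n g) (hf₀ : psum f m = 0) :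
    inConf (L₁ + L₂) (m + n) (Fin.append f g) := by
  rw [inConf_iff] at *
  refine ⟨by rw [sum_abs_append, hf.1, hg.1]; push_cast; ring, fun k hk => ?_⟩
  rcases le_or_gt k m with hkm | hkm
  · rw [psum_append_of_le f g hkm]
    exact hf.2 k hkm
  · obtain ⟨j, rfl⟩ := Nat.exists_eq_add_of_le hkm.le
    rw [psum_append_add, hf₀, zero_add]
    exact hg.2 j (by omega)

lemma psum_append_negRev_add {f : Fin m → ℤ} {g : Fin n → ℤ} (h : psum f m = psum g n)
    {j : ℕ} (hj : j ≤ n) : psum (Fin.append f (negRev g)) (m + j) = psum g (n - j) := by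
  rw [psum_append_add, psum_negRev g hj, h, add_sub_cancel]

lemma inConf_append_negRev {L₁ L₂ : ℕ} {f : Fin m → ℤ} {g : Fin n → ℤ}
    (hf : inConf L₁ m f) (hg : inConf L₂ n g) (h : psum f m = psum g n) :
    inConf (L₁ + L₂) (m + n) (Fin.append f (negRev g)) := by
  rw [inConf_iff] at *
  refine ⟨by rw [sum_abs_append, sum_abs_negRev, hf.1, hg.1]; push_cast; ring, fun k hk => ?_⟩
  rcases le_or_gt k m with hkm | hkm
  · rw [psum_append_of_le _ _ hkm]
    exact hf.2 k hkm
  · obtain ⟨j, rfl⟩ := Nat.exists_eq_add_of_le hkm.le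
    rw [psum_append_negRev_add h (by omega)]
    exact hg.2 _ (by omega)

lemma psum_self_nonneg_and_le_of_inConf {L : ℕ} {ℓ : Fin n → ℤ} (h : inConf L n ℓ) :
    0 ≤ psum ℓ n ∧ psum ℓ n ≤ (L : ℤ) - n := by
  refine ⟨(inConf_iff.mp h).2 n le_rfl, ?_⟩
  rw [← h.1, psum_self]
  exact Finset.sum_le_sum fun i _ => le_abs_self (ℓ i)

end Configurations

abbrev Config := Σ N : ℕ, Fin N → ℤ

namespace Config

def append (p q : Config) : Config := ⟨p.1 + q.1, Fin.append p.2 q.2⟩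

def negRev (q : Config) : Config := ⟨q.1, _root_.negRev q.2⟩

def endpoint (q : Config) : ℤ := psum q.2 q.1

lemma negRev_injective : Function.Injective negRev := by
  have hinv : Function.Involutive negRev := fun ⟨n, ℓ⟩ =>
    congrArg (Sigma.mk n) (_root_.negRev_negRev ℓ)
  exact hinv.injective

lemma endpoint_append (p q : Config) : (p.append q).endpoint = p.endpoint + q.endpoint :=
  psum_append_add p.2 q.2 q.1

lemma endpoint_append_negRev {p q : Config} (h : p.endpoint = q.endpoint) :
    (p.append q.negRev).endpoint = 0 := by
  change psum (Fin.append p.2 (_root_.negRev q.2)) (p.1 + q.1) = 0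
  simpa using psum_append_negRev_add (g := q.2) h le_rfl

-- The size `N + Σ|ℓ_i| = L` of the first factor locates the splitting point.
lemma append_injOn (L : ℕ) :
    Set.InjOn (Function.uncurry append) {pq | inConf L pq.1.1 pq.1.2} := by
  rintro ⟨⟨m, f⟩, ⟨n, g⟩⟩ (hf : inConf L m f) ⟨⟨m', f'⟩, ⟨n', g'⟩⟩ (hf' : inConf L m' f') h
  change (⟨m + n, Fin.append f g⟩ : Config) = ⟨m' + n', Fin.append f' g'⟩ at h
  have hm : m = m' := by
    have hsize := congrArg (fun c : Config => (m' : ℤ) + psum (fun i => |c.2 i|) m') h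
    simp only [psum_abs_append, hf'.1, add_sub_cancel] at hsize
    refine (strictMono_add_psum_abs (Fin.append f g)).injective ?_
    simp only [psum_abs_append, hf.1, add_sub_cancel, hsize]
  subst hm
  obtain ⟨hn, hc⟩ := Sigma.mk.inj_iff.mp h
  obtain rfl : n = n' := by omega
  obtain ⟨rfl, rfl⟩ := Prod.ext_iff.mp
    ((Fin.appendEquiv m n).injective (a₁ := (f, g)) (a₂ := (f', g')) (eq_of_heq hc))
  rfl

lemma append_negRev_injOn (L : ℕ) :
    Set.InjOn (fun pq : Config × Config => pq.1.append pq.2.negRev)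
      {pq | inConf L pq.1.1 pq.1.2} :=
  (append_injOn L).comp (Prod.map_injective.mpr ⟨Function.injective_id, negRev_injective⟩).injOn
    fun _ h => h

end Config

/-- The finite set `Ω_L^+` of configurations, cut out of a box containing it. -/
def admissible (L : ℕ) : Finset Config :=
  ((Finset.Icc 1 L).sigma fun N => Fintype.piFinset fun _ : Fin N => Finset.Icc (-(L : ℤ)) L).filter
    fun q => inConf L q.1 q.2

lemma mem_admissible {L : ℕ} {q : Config} : q ∈ admissible L ↔ 1 ≤ q.1 ∧ inConf L q.1 q.2 := by
  simp only [admissible, Finset.mem_filter, Finset.mem_sigma, Finset.mem_Icc,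
    Fintype.mem_piFinset, ← abs_le]
  refine ⟨fun h => ⟨h.1.1.1, h.2⟩, fun ⟨hN, hq⟩ => ⟨⟨⟨hN, ?_⟩, fun i => ?_⟩, hq⟩⟩
  all_goals have hsum : 0 ≤ ∑ j, |q.2 j| := Finset.sum_nonneg fun j _ => abs_nonneg _
  · have := hq.1
    omega
  · calc |q.2 i| ≤ ∑ j, |q.2 j| :=
          Finset.single_le_sum (f := fun j => |q.2 j|) (fun j _ => abs_nonneg _) (Finset.mem_univ i)
      _ ≤ L := by rw [hq.1]; omega

lemma sum_tsum_eq_sum_admissible (L : ℕ) (F : Config → ℝ)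
    (hF : ∀ q : Config, ¬ inConf L q.1 q.2 → F q = 0) :
    ∑ N ∈ Finset.Icc 1 L, ∑' ℓ : Fin N → ℤ, F ⟨N, ℓ⟩ = ∑ q ∈ admissible L, F q := by
  rw [admissible, Finset.sum_filter_of_ne fun q _ hq => not_imp_comm.mp (hF q) hq,
    Finset.sum_sigma]
  refine Finset.sum_congr rfl fun N hN => tsum_eq_sum fun ℓ hℓ => hF _ fun hq => hℓ ?_
  exact (Finset.mem_sigma.mp (Finset.mem_filter.mp
    (mem_admissible.mpr ⟨(Finset.mem_Icc.mp hN).1, hq⟩)).1).2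

def constrained (L : ℕ) : Finset Config := (admissible L).filter (·.endpoint = 0)

lemma Config.append_mem_constrained {L₁ L₂ : ℕ} {p q : Config} (hp : p ∈ constrained L₁)
    (hq : q ∈ constrained L₂) : p.append q ∈ constrained (L₁ + L₂) := by
  simp only [constrained, Finset.mem_filter, mem_admissible] at hp hq ⊢
  refine ⟨⟨by simp only [Config.append]; omega, inConf_append hp.1.2 hq.1.2 hp.2⟩, ?_⟩
  rw [Config.endpoint_append, hp.2, hq.2, add_zero]

lemma Config.append_negRev_mem_constrained {L₁ L₂ : ℕ} {p q : Config} (hp : p ∈ admissible L₁)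
    (hq : q ∈ admissible L₂) (h : p.endpoint = q.endpoint) :
    p.append q.negRev ∈ constrained (L₁ + L₂) := by
  rw [mem_admissible] at hp hq
  refine Finset.mem_filter.mpr ⟨mem_admissible.mpr ⟨?_, inConf_append_negRev hp.2 hq.2 h⟩,
    Config.endpoint_append_negRev h⟩
  simp only [Config.append, Config.negRev]
  omega

lemma Zplus_eq_sum (β δ : ℝ) (L : ℕ) :
    Zplus β δ L = ∑ q ∈ admissible L, Real.exp (Ham β δ q.2) := by
  refine (sum_tsum_eq_sum_admissible L
    (fun q => if inConf L q.1 q.2 then Real.exp (Ham β δ q.2) else 0)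
    fun q hq => if_neg hq).trans ?_
  exact Finset.sum_congr rfl fun q hq => if_pos (mem_admissible.mp hq).2

lemma Zplusc_eq_sum (β δ : ℝ) (L : ℕ) :
    Zplusc β δ L = ∑ q ∈ constrained L, Real.exp (Ham β δ q.2) := by
  refine (sum_tsum_eq_sum_admissible L
    (fun q => if inConf L q.1 q.2 ∧ q.endpoint = 0 then Real.exp (Ham β δ q.2) else 0)
    fun q hq => if_neg fun h => hq h.1).trans ?_
  rw [constrained, Finset.sum_filter]
  exact Finset.sum_congr rfl fun q hq => if_congr (and_iff_right (mem_admissible.mp hq).2) rfl rfl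

lemma Zplusc_le_Zplus (β δ : ℝ) (L : ℕ) : Zplusc β δ L ≤ Zplus β δ L := by
  rw [Zplusc_eq_sum, Zplus_eq_sum]
  exact Finset.sum_le_sum_of_subset_of_nonneg (Finset.filter_subset _ _)
    fun q _ _ => (Real.exp_pos _).le

section PartitionFunctions

variable {β δ : ℝ}

lemma sum_exp_Ham_mul_le {s t u : Finset Config} (e : Config → Config → Config)
    (he : Set.InjOn (Function.uncurry e) (s ×ˢ t : Set (Config × Config)))
    (hmaps : ∀ p ∈ s, ∀ q ∈ t, e p q ∈ u)
    (hHam : ∀ p ∈ s, ∀ q ∈ t, Ham β δ p.2 + Ham β δ q.2 ≤ Ham β δ (e p q).2) :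
    (∑ p ∈ s, Real.exp (Ham β δ p.2)) * ∑ q ∈ t, Real.exp (Ham β δ q.2)
      ≤ ∑ r ∈ u, Real.exp (Ham β δ r.2) := by
  rw [Finset.sum_mul_sum, ← Finset.sum_product']
  refine Finset.sum_le_sum_of_injOn (Function.uncurry e) (by simpa using he)
    (fun pq hpq => hmaps _ (Finset.mem_product.mp hpq).1 _ (Finset.mem_product.mp hpq).2)
    (fun _ _ => (Real.exp_pos _).le) fun pq hpq => ?_
  rw [← Real.exp_add]
  exact Real.exp_le_exp.mpr (hHam _ (Finset.mem_product.mp hpq).1 _ (Finset.mem_product.mp hpq).2)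

lemma Ham_add_le_Ham_append (hβ : 0 ≤ β) (hδ : 0 ≤ δ) {m n : ℕ} {f : Fin m → ℤ} (g : Fin n → ℤ)
    (hf : psum f m = 0) : Ham β δ f + Ham β δ g ≤ Ham β δ (Fin.append f g) :=
  Ham_add_le_of_le hβ hδ (wedgeSum_add_le_wedgeSum_append f g)
    (contacts_append_of_psum_eq_zero g hf).ge

lemma Ham_add_le_Ham_append_negRev (hβ : 0 ≤ β) (hδ : 0 ≤ δ) {m n : ℕ} {f : Fin m → ℤ}
    {g : Fin n → ℤ} (h : psum f m = psum g n) :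
    Ham β δ f + Ham β δ g ≤ Ham β δ (Fin.append f (negRev g)) :=
  Ham_add_le_of_le hβ hδ (wedgeSum_negRev g ▸ wedgeSum_add_le_wedgeSum_append f (negRev g))
    (contacts_add_le_contacts_append_negRev h)

theorem Zplusc_mul_le (hβ : 0 ≤ β) (hδ : 0 ≤ δ) (L₁ L₂ : ℕ) :
    Zplusc β δ L₁ * Zplusc β δ L₂ ≤ Zplusc β δ (L₁ + L₂) := by
  simp only [Zplusc_eq_sum]
  refine sum_exp_Ham_mul_le Config.append ((Config.append_injOn L₁).mono fun pq hpq => ?_)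
    (fun p hp q hq => Config.append_mem_constrained hp hq) fun p hp q hq => ?_
  · exact (mem_admissible.mp (Finset.mem_filter.mp hpq.1).1).2
  · exact Ham_add_le_Ham_append hβ hδ q.2 (Finset.mem_filter.mp hp).2

def ZplusAt (β δ : ℝ) (L : ℕ) (a : ℤ) : ℝ :=
  ∑ q ∈ (admissible L).filter (·.endpoint = a), Real.exp (Ham β δ q.2)

lemma Zplus_eq_sum_ZplusAt (L : ℕ) :
    Zplus β δ L = ∑ a ∈ Finset.Ico 0 (L : ℤ), ZplusAt β δ L a := by
  refine (Zplus_eq_sum β δ L).trans (Finset.sum_fiberwise_of_maps_to (fun q hq => ?_) _).symm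
  obtain ⟨hN, hq⟩ := mem_admissible.mp hq
  have hbounds := psum_self_nonneg_and_le_of_inConf hq
  exact Finset.mem_Ico.mpr ⟨hbounds.1, by unfold Config.endpoint; omega⟩

lemma exists_Zplus_le_mul_ZplusAt {L : ℕ} (hL : 1 ≤ L) :
    ∃ a, Zplus β δ L ≤ L * ZplusAt β δ L a := by
  obtain ⟨a, -, ha⟩ := Finset.exists_max_image (Finset.Ico 0 (L : ℤ)) (ZplusAt β δ L)
    ⟨0, Finset.mem_Ico.mpr ⟨le_rfl, by omega⟩⟩
  refine ⟨a, ?_⟩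
  rw [Zplus_eq_sum_ZplusAt]
  simpa using Finset.sum_le_card_nsmul _ _ _ ha

lemma ZplusAt_sq_le (hβ : 0 ≤ β) (hδ : 0 ≤ δ) (L : ℕ) (a : ℤ) :
    ZplusAt β δ L a ^ 2 ≤ Zplusc β δ (2 * L) := by
  rw [sq, ZplusAt, Zplusc_eq_sum, two_mul]
  refine sum_exp_Ham_mul_le (fun p q => p.append q.negRev)
    ((Config.append_negRev_injOn L).mono fun pq hpq => ?_) (fun p hp q hq => ?_)
    fun p hp q hq => ?_
  · exact (mem_admissible.mp (Finset.mem_filter.mp hpq.1).1).2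
  all_goals
    obtain ⟨hp, hpa⟩ := Finset.mem_filter.mp hp
    obtain ⟨hq, hqa⟩ := Finset.mem_filter.mp hq
  · exact Config.append_negRev_mem_constrained hp hq (hpa.trans hqa.symm)
  · exact Ham_add_le_Ham_append_negRev hβ hδ (hpa.trans hqa.symm)

theorem Zplus_sq_le (hβ : 0 ≤ β) (hδ : 0 ≤ δ) {L : ℕ} (hL : 1 ≤ L) :
    Zplus β δ L ^ 2 ≤ L ^ 2 * Zplusc β δ (2 * L) := by
  obtain ⟨a, ha⟩ := exists_Zplus_le_mul_ZplusAt (β := β) (δ := δ) hL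
  have hZ : 0 ≤ Zplus β δ L := by
    rw [Zplus_eq_sum]
    exact Finset.sum_nonneg fun q _ => (Real.exp_pos _).le
  calc Zplus β δ L ^ 2 ≤ (L * ZplusAt β δ L a) ^ 2 := pow_le_pow_left₀ hZ ha 2
    _ = L ^ 2 * ZplusAt β δ L a ^ 2 := mul_pow _ _ 2
    _ ≤ L ^ 2 * Zplusc β δ (2 * L) := by gcongr; exact ZplusAt_sq_le hβ hδ L a

end PartitionFunctions

/-- supermultiplicativity of the constrained partition function, and
comparison between the free and constrained partition functions. -/
theorem statement18 (β δ : ℝ) (hβ : 0 < β) (hδ : 0 ≤ δ) :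
    (∀ L₁ L₂ : ℕ, 1 ≤ L₁ → 1 ≤ L₂ →
      Zplusc β δ L₁ * Zplusc β δ L₂ ≤ Zplusc β δ (L₁ + L₂)) ∧
    (∀ L : ℕ, 1 ≤ L →
      1 / (L : ℝ) ^ 2 * Zplus β δ L ^ 2 ≤ Zplusc β δ (2 * L) ∧
        Zplusc β δ (2 * L) ≤ Zplus β δ (2 * L)) := by
  refine ⟨fun L₁ L₂ _ _ => Zplusc_mul_le hβ.le hδ L₁ L₂,
    fun L hL => ⟨?_, Zplusc_le_Zplus β δ (2 * L)⟩⟩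
  have hL₀ : (0 : ℝ) < (L : ℝ) ^ 2 := by positivity
  rw [one_div_mul_eq_div, div_le_iff₀ hL₀, mul_comm]
  exact Zplus_sq_le hβ.le hδ hL

end
end
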